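/- arXiv:1209.5912 — 2 statements merged into one kernel-verified Lean document; each statement's English description precedes it below -/
import Mathlib

section
/- Let N ≥ 2 and let 𝒦 = {K₁, …, K_M} be a finite set of row-stochastic N×N real matrices, each with strictly positive diagonal entries, and let p₁, …, p_M be strictly positive reals summing to 1. If Σᵢ pᵢKᵢ is primitive, then for every pair (i,j) ∈ {1,…,N}² there exist an integer L with 1 ≤ L ≤ N−1 and indices k₁, …, k_L ∈ {1,…,M} such that the (i,j) entry of the product K_{k₁}K_{k₂}⋯K_{k_L} is strictly positive. -/
/-! Only the positivity pattern of the matrices matters. The positive entries of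
`A = ∑ pₖ Kₖ` are those positive in some `Kₖ`, so `A` has a positive diagonal, and an entry of
`A ^ L` is positive iff the same entry of some product of `L` of the `Kₖ` is. Because of the
positive diagonal, the set of indices reachable from `i` in `d` steps of the digraph of `A` grows
with `d` and, once it stops growing, stays constant; starting from `{i}`, it is therefore constant
from `d = N - 1` on. As some power `A ^ m` is positive by primitivity, so is `A ^ (N - 1)`. -/

open Matrix Kronecker Finset

/-- A square real matrix is row-stochastic if it has nonnegative entries and
each of its rows sums to 1. -/
def RowStochastic {N : ℕ} (K : Matrix (Fin N) (Fin N) ℝ) : Prop :=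
  (∀ i j, 0 ≤ K i j) ∧ ∀ i, ∑ j, K i j = 1

/-- A nonnegative square matrix `T` is primitive if `T ^ m` has all entries
strictly positive for some integer `m ≥ 1`. -/
def IsPrimitive {n : Type*} [Fintype n] [DecidableEq n] (T : Matrix n n ℝ) : Prop :=
  ∃ m : ℕ, 1 ≤ m ∧ ∀ i j, 0 < (T ^ m) i j

namespace Finset

variable {α : Type*} [Fintype α]

theorem iterate_eq_iterate_card_sub_of_le {F : Finset α → Finset α} (hF : ∀ t, t ⊆ F t)
    (s : Finset α) {m : ℕ} (hm : Fintype.card α - #s ≤ m) :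
    F^[m] s = F^[Fintype.card α - #s] s := by
  have hmono {a b : ℕ} (h : a ≤ b) : F^[a] s ⊆ F^[b] s :=
    Function.monotone_iterate_of_id_le hF h s
  have hs_le : ∀ k, #s ≤ #(F^[k] s) := fun k => card_le_card (hmono k.zero_le)
  have hgrowth : Monotone fun k => #(F^[k] s) - #s := fun a b h =>
    Nat.sub_le_sub_right (card_le_card (hmono h)) _
  have hstab : ∀ k, #(F^[k] s) - #s = #(F^[k + 1] s) - #s →
      #(F^[k + 1] s) - #s = #(F^[k + 2] s) - #s := by
    intro k hk
    have hfix : F (F^[k] s) = F^[k] s := by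
      rw [← Function.iterate_succ_apply' F k]
      exact (eq_of_subset_of_card_le (hmono (Nat.le_add_right k 1))
        (by have := hs_le k; have := hs_le (k + 1); omega)).symm
    rw [Function.iterate_succ_apply' F (k + 1), Function.iterate_succ_apply' F k, hfix, hfix]
  have hcard : #(F^[m] s) - #s = #(F^[Fintype.card α - #s] s) - #s :=
    Nat.stabilises_of_monotone hgrowth (fun k => Nat.sub_le_sub_right (card_le_univ _) _) hstab hm
  exact (eq_of_subset_of_card_le (hmono hm)
    (by have := hs_le m; have := hs_le (Fintype.card α - #s); omega)).symm

theorem iterate_subset_iterate_card_sub {F : Finset α → Finset α} (hF : ∀ t, t ⊆ F t)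
    (s : Finset α) (m : ℕ) : F^[m] s ⊆ F^[Fintype.card α - #s] s := by
  rcases le_total m (Fintype.card α - #s) with hm | hm
  · exact Function.monotone_iterate_of_id_le hF hm s
  · exact (iterate_eq_iterate_card_sub_of_le hF s hm).subset

end Finset

namespace Matrix

variable {l m n ι R : Type*} [Semiring R] [LinearOrder R] [IsStrictOrderedRing R]

theorem mul_apply_pos_iff [Fintype m] {A : Matrix l m R} {B : Matrix m n R}
    (hA : ∀ i j, 0 ≤ A i j) (hB : ∀ i j, 0 ≤ B i j) {i : l} {j : n} :
    0 < (A * B) i j ↔ ∃ k, 0 < A i k ∧ 0 < B k j := by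
  rw [mul_apply, Finset.sum_pos_iff_of_nonneg fun k _ => mul_nonneg (hA i k) (hB k j)]
  simp only [Finset.mem_univ, true_and]
  exact exists_congr fun k => ⟨fun h => ⟨pos_of_mul_pos_left h (hB k j),
    pos_of_mul_pos_right h (hA i k)⟩, fun h => mul_pos h.1 h.2⟩

theorem listProd_apply_nonneg [Fintype n] [DecidableEq n] {L : List (Matrix n n R)}
    (hL : ∀ B ∈ L, ∀ i j, 0 ≤ B i j) (i j : n) : 0 ≤ L.prod i j := by
  refine List.prod_induction (fun P : Matrix n n R => ∀ i j, 0 ≤ P i j) ?_ ?_ hL i j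
  · intro P Q hP hQ i j
    exact Finset.sum_nonneg fun k _ => mul_nonneg (hP i k) (hQ k j)
  · intro i j
    rw [one_apply]
    split_ifs <;> simp

theorem sum_smul_apply_pos_iff [Fintype ι] {K : ι → Matrix m n R} {c : ι → R}
    (hK : ∀ k i j, 0 ≤ K k i j) (hc : ∀ k, 0 < c k) {i : m} {j : n} :
    0 < (∑ k, c k • K k) i j ↔ ∃ k, 0 < K k i j := by
  simp only [sum_apply, smul_apply, smul_eq_mul]
  rw [Finset.sum_pos_iff_of_nonneg fun k _ => mul_nonneg (hc k).le (hK k i j)]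
  simp only [Finset.mem_univ, true_and, mul_pos_iff_of_pos_left (hc _)]

section Successors

variable [Fintype n] [DecidableEq n]

def successors (A : Matrix n n R) (s : Finset n) : Finset n :=
  {j | ∃ i ∈ s, 0 < A i j}

theorem pow_apply_pos_iff_mem_iterate_successors {A : Matrix n n R} (hA : ∀ i j, 0 ≤ A i j)
    (d : ℕ) (i j : n) : 0 < (A ^ d) i j ↔ j ∈ (successors A)^[d] {i} := by
  induction d generalizing j with
  | zero => by_cases h : i = j <;> simp [h, eq_comm]
  | succ d ih =>
    rw [pow_succ, mul_apply_pos_iff (pow_apply_nonneg hA d) hA,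
      Function.iterate_succ_apply', successors]
    simp [ih]

theorem pow_card_sub_one_apply_pos {A : Matrix n n R} (hA : ∀ i j, 0 ≤ A i j)
    (hdiag : ∀ i, 0 < A i i) {d : ℕ} {i j : n} (h : 0 < (A ^ d) i j) :
    0 < (A ^ (Fintype.card n - 1)) i j := by
  have hsucc : ∀ s, s ⊆ successors A s := fun s i hi => by
    simpa [successors] using ⟨i, hi, hdiag i⟩
  rw [pow_apply_pos_iff_mem_iterate_successors hA] at h ⊢
  simpa using Finset.iterate_subset_iterate_card_sub hsucc {i} d h

theorem exists_listProd_apply_pos_of_pow_apply_pos {A : Matrix n n R} {K : ι → Matrix n n R}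
    (hA : ∀ i j, 0 ≤ A i j) (hK : ∀ k i j, 0 ≤ K k i j)
    (hAK : ∀ i j, 0 < A i j → ∃ k, 0 < K k i j) {L : ℕ} {i j : n} (h : 0 < (A ^ L) i j) :
    ∃ f : Fin L → ι, 0 < (List.ofFn fun s => K (f s)).prod i j := by
  induction L generalizing i with
  | zero => exact ⟨Fin.elim0, by simpa using h⟩
  | succ L ih =>
    rw [pow_succ', mul_apply_pos_iff hA (pow_apply_nonneg hA L)] at h
    obtain ⟨x, hix, hxj⟩ := h
    obtain ⟨k, hk⟩ := hAK i x hix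
    obtain ⟨f, hf⟩ := ih hxj
    have hword_nonneg : ∀ B ∈ List.ofFn (fun s => K (f s)), ∀ i j, 0 ≤ B i j := by
      simp only [List.mem_ofFn, forall_exists_index]
      rintro _ s rfl
      exact hK (f s)
    refine ⟨Fin.cons k f, ?_⟩
    simp only [List.ofFn_succ, Fin.cons_zero, Fin.cons_succ, List.prod_cons]
    rw [mul_apply_pos_iff (hK k) (listProd_apply_nonneg hword_nonneg)]
    exact ⟨x, hk, by simpa using hf⟩

end Successors

end Matrix

theorem stmt2_general {N M : ℕ} (hN : 2 ≤ N) (hM : 1 ≤ M)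
    (K : Fin M → Matrix (Fin N) (Fin N) ℝ)
    (hK : ∀ k, RowStochastic (K k))
    (hdiag : ∀ k i, 0 < K k i i)
    (p : Fin M → ℝ) (hp : ∀ k, 0 < p k)
    (hprim : _root_.IsPrimitive (∑ k, p k • K k)) :
    ∀ i j : Fin N, ∃ L : ℕ, 1 ≤ L ∧ L ≤ N - 1 ∧
      ∃ f : Fin L → Fin M, 0 < ((List.ofFn fun s => K (f s)).prod) i j := by
  have hK0 : ∀ k i j, 0 ≤ K k i j := fun k => (hK k).1
  have hA_pos_iff {a b : Fin N} := sum_smul_apply_pos_iff hK0 hp (i := a) (j := b)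
  have hA0 : ∀ a b, 0 ≤ (∑ k, p k • K k) a b := fun a b => by
    simp only [Matrix.sum_apply, Matrix.smul_apply, smul_eq_mul]
    exact sum_nonneg fun k _ => mul_nonneg (hp k).le (hK0 k a b)
  have hAdiag : ∀ a, 0 < (∑ k, p k • K k) a a := fun a => hA_pos_iff.2 ⟨⟨0, hM⟩, hdiag _ a⟩
  obtain ⟨m, -, hm⟩ := hprim
  intro i j
  have hpos := pow_card_sub_one_apply_pos hA0 hAdiag (hm i j)
  rw [Fintype.card_fin] at hpos
  exact ⟨N - 1, by omega, le_rfl,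
    exists_listProd_apply_pos_of_pow_apply_pos hA0 hK0 (fun _ _ => hA_pos_iff.1) hpos⟩

theorem stmt2 {N M : ℕ} (hN : 2 ≤ N) (hM : 1 ≤ M)
    (K : Fin M → Matrix (Fin N) (Fin N) ℝ)
    (hK : ∀ k, RowStochastic (K k))
    (hdiag : ∀ k i, 0 < K k i i)
    (p : Fin M → ℝ) (hp : ∀ k, 0 < p k) (hpsum : ∑ k, p k = 1)
    (hprim : _root_.IsPrimitive (∑ k, p k • K k)) :
    ∀ i j : Fin N, ∃ L : ℕ, 1 ≤ L ∧ L ≤ N - 1 ∧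
      ∃ f : Fin L → Fin M, 0 < ((List.ofFn fun s => K (f s)).prod) i j :=
  stmt2_general hN hM K hK hdiag p hp hprim
end

section
/- Let 𝒦 = {K₁, …, K_M} be a finite set of row-stochastic N×N real matrices, each with strictly positive diagonal entries, and let p₁, …, p_M be strictly positive reals summing to 1. If Σᵢ pᵢKᵢ is primitive, then ρ( ((I−J) ⊗ (I−J)) · Σᵢ pᵢ (Kᵢ ⊗ Kᵢ) ) < 1. -/
open Matrix Kronecker Finset

/-- `J = (1/N) 𝟙 𝟙ᵀ`, the `N × N` averaging matrix. -/
noncomputable def Jmat (N : ℕ) : Matrix (Fin N) (Fin N) ℝ :=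
  Matrix.of fun _ _ => (N : ℝ)⁻¹

/-- The spectral radius of a real square matrix: the maximum modulus of its
complex eigenvalues. -/
noncomputable def specRad {n : Type*} [Fintype n] [DecidableEq n]
    (A : Matrix n n ℝ) : ℝ :=
  (spectralRadius ℂ (A.map Complex.ofReal)).toReal

/-!
Write `Q = I - J`, `P = Q ⊗ Q` and `T = ∑ pₖ (Kₖ ⊗ Kₖ)`, a stochastic matrix. Since every `Kₖ`
fixes `𝟙`, `Q Kₖ Q = Q Kₖ`, hence `P T P = P T` and `(P T) ^ m = P T ^ m`; moreover `P 𝟙 = 0`.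
The positive diagonals make `T` primitive: with `E = ∑ pₖ Kₖ` and `δ` the least diagonal entry,
`T` dominates `δ (E ⊗ I)` and `δ (I ⊗ E)` entrywise, so `T ^ (2m) ≥ δ ^ (2m) (E ^ m ⊗ E ^ m)`.
A strictly positive power `T ^ m` pulls every vector towards the constants at a geometric rate
`θ < 1` (Doeblin), and `P` does not see constants, so an eigenvector `v` of `P T` with eigenvalue
`μ` satisfies `|μ| ^ (m k) ‖v‖ = ‖P T ^ (m k) v‖ ≤ ‖P‖ θ ^ k ‖v‖` for all `k`, forcing `|μ| < 1`.
-/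

open scoped Matrix.Norms.Operator

lemma mul_pow_succ_of_mul_mul_eq {M : Type*} [Monoid M] {p t : M} (h : p * t * p = p * t)
    (k : ℕ) : (p * t) ^ (k + 1) = p * t ^ (k + 1) := by
  induction k with
  | zero => simp
  | succ k ih => rw [pow_succ', ih, ← mul_assoc, h, mul_assoc, ← pow_succ']

lemma one_sub_mul_mul_one_sub_of_mul_eq {R : Type*} [Ring R] {j k : R} (hj : j * j = j)
    (hk : k * j = j) : (1 - j) * k * (1 - j) = (1 - j) * k := by
  simp [mul_sub, sub_mul, mul_assoc, hj, hk]

lemma exists_pos_le_of_forall_pos {α : Type*} [Finite α] (f : α → ℝ) (hf : ∀ a, 0 < f a) :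
    ∃ δ > 0, ∀ a, δ ≤ f a := by
  cases isEmpty_or_nonempty α
  · exact ⟨1, one_pos, isEmptyElim⟩
  · obtain ⟨a₀, ha₀⟩ := Finite.exists_min f
    exact ⟨f a₀, hf a₀, ha₀⟩

namespace Matrix

variable {n : Type*} [Fintype n]

lemma exists_mulVec_eq_smul_of_mem_spectrum [DecidableEq n] {A : Matrix n n ℂ} {μ : ℂ}
    (h : μ ∈ spectrum ℂ A) : ∃ v ≠ 0, A *ᵥ v = μ • v := by
  rw [← spectrum_toLin', ← Module.End.hasEigenvalue_iff_mem_spectrum] at h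
  obtain ⟨v, hv⟩ := h.exists_hasEigenvector
  exact ⟨v, hv.2, by simpa using hv.apply_eq_smul⟩

lemma pow_mulVec_eq_smul [DecidableEq n] {R : Type*} [CommRing R] {A : Matrix n n R} {μ : R}
    {v : n → R} (h : A *ᵥ v = μ • v) (m : ℕ) : (A ^ m) *ᵥ v = μ ^ m • v := by
  induction m with
  | zero => simp
  | succ m ih => rw [pow_succ', ← mulVec_mulVec, ih, mulVec_smul, h, smul_smul, pow_succ]

lemma mul_apply_le_mul_apply {A A' B B' : Matrix n n ℝ} (hA : ∀ i j, 0 ≤ A i j)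
    (hB : ∀ i j, 0 ≤ B i j) (hAA' : ∀ i j, A i j ≤ A' i j) (hBB' : ∀ i j, B i j ≤ B' i j)
    (i j : n) : (A * B) i j ≤ (A' * B') i j :=
  sum_le_sum fun l _ => mul_le_mul (hAA' i l) (hBB' l j) (hB l j) ((hA i l).trans (hAA' i l))

lemma pow_apply_le_pow_apply [DecidableEq n] {A B : Matrix n n ℝ} (hA : ∀ i j, 0 ≤ A i j)
    (hAB : ∀ i j, A i j ≤ B i j) (m : ℕ) (i j : n) : (A ^ m) i j ≤ (B ^ m) i j := by
  induction m generalizing i j with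
  | zero => rfl
  | succ m ih =>
    rw [pow_succ, pow_succ]
    exact mul_apply_le_mul_apply (pow_apply_nonneg hA m) hA ih hAB i j

lemma kronecker_pow [DecidableEq n] {m : Type*} [Fintype m] [DecidableEq m] {R : Type*}
    [CommRing R] (A : Matrix n n R) (B : Matrix m m R) (k : ℕ) :
    (A ⊗ₖ B) ^ k = (A ^ k) ⊗ₖ (B ^ k) := by
  induction k with
  | zero => simp
  | succ k ih => rw [pow_succ, ih, ← mul_kronecker_mul, ← pow_succ, ← pow_succ]

lemma kronecker_mulVec_one {m : Type*} [Fintype m] {R : Type*} [CommRing R]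
    (A : Matrix n n R) (B : Matrix m m R) :
    (A ⊗ₖ B) *ᵥ 1 = fun x => (A *ᵥ 1) x.1 * (B *ᵥ 1) x.2 := by
  ext x
  simp [mulVec, dotProduct, Fintype.sum_prod_type, sum_mul_sum]

lemma map_ofReal_mul (A B : Matrix n n ℝ) :
    (A * B).map Complex.ofReal = A.map Complex.ofReal * B.map Complex.ofReal :=
  Matrix.map_mul (f := Complex.ofRealHom)

lemma map_ofReal_pow [DecidableEq n] (A : Matrix n n ℝ) (k : ℕ) :
    (A ^ k).map Complex.ofReal = A.map Complex.ofReal ^ k :=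
  map_pow Complex.ofRealHom.mapMatrix A k

lemma one_sub_card_mul_nonneg {A : Matrix n n ℝ} [DecidableEq n] (hA : A ∈ rowStochastic ℝ n)
    {ε : ℝ} (hε : ∀ i j, ε ≤ A i j) : 0 ≤ 1 - Fintype.card n * ε := by
  cases isEmpty_or_nonempty n
  · simp
  · obtain ⟨i⟩ := ‹Nonempty n›
    have : Fintype.card n * ε ≤ ∑ j, A i j := by
      simpa using sum_le_sum fun j (_ : j ∈ univ) => hε i j
    linarith [sum_row_of_mem_rowStochastic hA i]

/-- Doeblin's estimate. The new centre `c` comes from splitting `A = ε 𝟙𝟙ᵀ + (A - ε 𝟙𝟙ᵀ)`, whose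
second summand is nonnegative with row sums `1 - card n * ε`. -/
lemma exists_norm_map_mulVec_sub_const_le [DecidableEq n] {A : Matrix n n ℝ}
    (hA : A ∈ rowStochastic ℝ n) {ε : ℝ} (hε : ∀ i j, ε ≤ A i j) {w : n → ℂ} {c₀ : ℂ} {B : ℝ}
    (hw : ‖w - fun _ => c₀‖ ≤ B) :
    ∃ c : ℂ, ‖A.map Complex.ofReal *ᵥ w - fun _ => c‖ ≤ (1 - Fintype.card n * ε) * B := by
  set θ := 1 - Fintype.card n * ε
  have hθ : 0 ≤ θ := one_sub_card_mul_nonneg hA hε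
  refine ⟨ε * ∑ x, w x + θ * c₀,
    (pi_norm_le_iff_of_nonneg (mul_nonneg hθ ((norm_nonneg _).trans hw))).2 fun i => ?_⟩
  have hsum : ∑ x, (A i x - ε) = θ := by
    simp [θ, sum_sub_distrib, sum_row_of_mem_rowStochastic hA i]
  have key : (A.map Complex.ofReal *ᵥ w) i - (ε * ∑ x, w x + θ * c₀)
      = ∑ x, ((A i x - ε : ℝ) : ℂ) * (w x - c₀) := by
    simp only [mulVec, dotProduct, map_apply, mul_sub, sum_sub_distrib, ← sum_mul,
      ← Complex.ofReal_sum, hsum]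
    push_cast
    simp only [sub_mul, sum_sub_distrib, ← mul_sum]
    ring
  calc ‖(A.map Complex.ofReal *ᵥ w) i - (ε * ∑ x, w x + θ * c₀)‖
      = ‖∑ x, ((A i x - ε : ℝ) : ℂ) * (w x - c₀)‖ := by rw [key]
    _ ≤ ∑ x, (A i x - ε) * B := by
      refine (norm_sum_le _ _).trans (sum_le_sum fun x _ => ?_)
      rw [norm_mul, Complex.norm_real, Real.norm_of_nonneg (sub_nonneg.2 (hε i x))]
      exact mul_le_mul_of_nonneg_left ((norm_le_pi_norm _ x).trans hw) (sub_nonneg.2 (hε i x))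
    _ = θ * B := by rw [← sum_mul, hsum]

lemma exists_norm_map_pow_mulVec_sub_const_le [DecidableEq n] {A : Matrix n n ℝ}
    (hA : A ∈ rowStochastic ℝ n) {ε : ℝ} (hε : ∀ i j, ε ≤ A i j) (u : n → ℂ) (k : ℕ) :
    ∃ c : ℂ, ‖(A ^ k).map Complex.ofReal *ᵥ u - fun _ => c‖
      ≤ (1 - Fintype.card n * ε) ^ k * ‖u‖ := by
  induction k with
  | zero => exact ⟨0, by simp [← Pi.zero_def]⟩
  | succ k ih =>
    obtain ⟨c₀, hc₀⟩ := ih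
    obtain ⟨c, hc⟩ := exists_norm_map_mulVec_sub_const_le hA hε hc₀
    refine ⟨c, ?_⟩
    rwa [pow_succ', map_ofReal_mul, ← mulVec_mulVec, pow_succ', mul_assoc]

lemma map_ofReal_mulVec_const_eq_zero {P : Matrix n n ℝ} (hP : P *ᵥ 1 = 0) (c : ℂ) :
    P.map Complex.ofReal *ᵥ (fun _ => c) = 0 := by
  ext i
  have hi : ∑ j, P i j = 0 := by simpa [mulVec, dotProduct] using congrFun hP i
  simp [mulVec, dotProduct, ← sum_mul, ← Complex.ofReal_sum, hi]

lemma kronecker_mem_rowStochastic {ι κ : Type*} [Fintype ι] [DecidableEq ι] [Fintype κ]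
    [DecidableEq κ] {A : Matrix ι ι ℝ} {B : Matrix κ κ ℝ} (hA : A ∈ rowStochastic ℝ ι)
    (hB : B ∈ rowStochastic ℝ κ) : A ⊗ₖ B ∈ rowStochastic ℝ (ι × κ) := by
  refine mem_rowStochastic.2 ⟨fun x y => mul_nonneg (hA.1 _ _) (hB.1 _ _), ?_⟩
  rw [kronecker_mulVec_one, hA.2, hB.2]
  ext
  simp

end Matrix

lemma specRad_lt_one_of_forall_norm_lt_one {n : Type*} [Fintype n] [DecidableEq n]
    {A : Matrix n n ℝ} (h : ∀ μ ∈ spectrum ℂ (A.map Complex.ofReal), ‖μ‖ < 1) :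
    specRad A < 1 := by
  unfold specRad
  rcases (spectrum ℂ (A.map Complex.ofReal)).eq_empty_or_nonempty with hσ | hσ
  · simp [spectralRadius, hσ]
  · have hlt : spectralRadius ℂ (A.map Complex.ofReal) < (1 : NNReal) :=
      spectrum.spectralRadius_lt_of_forall_lt_of_nonempty hσ fun μ hμ => by
        simpa [← NNReal.coe_lt_coe] using h μ hμ
    simpa using (ENNReal.toReal_lt_toReal hlt.ne_top ENNReal.one_ne_top).2 hlt

section ProjectedStochastic

variable {n : Type*} [Fintype n] [DecidableEq n] {P T : Matrix n n ℝ}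

lemma norm_map_mul_pow_mulVec_le (hP : P *ᵥ 1 = 0) (hT : T ∈ rowStochastic ℝ n) {ε : ℝ}
    (hε : ∀ i j, ε ≤ T i j) (v : n → ℂ) (k : ℕ) :
    ‖(P * T ^ k).map Complex.ofReal *ᵥ v‖
      ≤ ‖P.map Complex.ofReal‖ * ((1 - Fintype.card n * ε) ^ k * ‖v‖) := by
  obtain ⟨c, hc⟩ := exists_norm_map_pow_mulVec_sub_const_le hT hε v k
  calc ‖(P * T ^ k).map Complex.ofReal *ᵥ v‖
      = ‖P.map Complex.ofReal *ᵥ ((T ^ k).map Complex.ofReal *ᵥ v - fun _ => c)‖ := by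
        rw [mulVec_sub, map_ofReal_mulVec_const_eq_zero hP, sub_zero, mulVec_mulVec,
          map_ofReal_mul]
    _ ≤ _ := (linfty_opNorm_mulVec _ _).trans (mul_le_mul_of_nonneg_left hc (norm_nonneg _))

lemma norm_lt_one_of_map_mul_mulVec_eq_smul (hPTP : P * T * P = P * T) (hP : P *ᵥ 1 = 0)
    (hT : T ∈ rowStochastic ℝ n) (hprim : _root_.IsPrimitive T) {μ : ℂ} {v : n → ℂ}
    (hv : v ≠ 0) (hμ : (P * T).map Complex.ofReal *ᵥ v = μ • v) : ‖μ‖ < 1 := by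
  obtain ⟨m, hm, hpos⟩ := hprim
  obtain ⟨ε, hε, hεle⟩ :=
    exists_pos_le_of_forall_pos (fun x : n × n => (T ^ m) x.1 x.2) fun x => hpos x.1 x.2
  have hTm := pow_mem hT m
  set θ := 1 - Fintype.card n * ε
  have hθ0 : 0 ≤ θ := one_sub_card_mul_nonneg hTm fun i j => hεle (i, j)
  have hθ1 : θ < 1 := by
    obtain ⟨i, -⟩ := Function.ne_iff.1 hv
    have : (0 : ℝ) < Fintype.card n := Nat.cast_pos.2 (Fintype.card_pos_iff.2 ⟨i⟩)
    exact sub_lt_self 1 (mul_pos this hε)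
  obtain ⟨k, hCk, hk⟩ : ∃ k, ‖P.map Complex.ofReal‖ * θ ^ k < 1 ∧ 1 ≤ k :=
    ((((tendsto_pow_atTop_nhds_zero_of_lt_one hθ0 hθ1).const_mul _).eventually
      (gt_mem_nhds (by simp))).and (Filter.eventually_ge_atTop 1)).exists
  have hpow : (P * T) ^ (m * k) = P * (T ^ m) ^ k := by
    obtain ⟨l, hl⟩ : ∃ l, m * k = l + 1 := Nat.exists_eq_add_one.2 (by positivity)
    rw [← pow_mul, hl, mul_pow_succ_of_mul_mul_eq hPTP]
  have hv' : 0 < ‖v‖ := norm_pos_iff.2 hv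
  have hμk : ‖μ‖ ^ (m * k) * ‖v‖ < 1 * ‖v‖ :=
    calc ‖μ‖ ^ (m * k) * ‖v‖ = ‖(P * (T ^ m) ^ k).map Complex.ofReal *ᵥ v‖ := by
          rw [← hpow, map_ofReal_pow, pow_mulVec_eq_smul hμ, norm_smul, norm_pow]
      _ ≤ ‖P.map Complex.ofReal‖ * (θ ^ k * ‖v‖) :=
          norm_map_mul_pow_mulVec_le hP hTm (fun i j => hεle (i, j)) v k
      _ < 1 * ‖v‖ := by rw [← mul_assoc]; exact mul_lt_mul_of_pos_right hCk hv'
  exact (pow_lt_one_iff_of_nonneg (norm_nonneg μ) (by positivity)).1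
    (lt_of_mul_lt_mul_right hμk hv'.le)

theorem specRad_mul_lt_one (hPTP : P * T * P = P * T) (hP : P *ᵥ 1 = 0) (hT : T ∈ rowStochastic ℝ n)
    (hprim : _root_.IsPrimitive T) : specRad (P * T) < 1 :=
  specRad_lt_one_of_forall_norm_lt_one fun _ hμ =>
    let ⟨_, hv, hμv⟩ := exists_mulVec_eq_smul_of_mem_spectrum hμ
    norm_lt_one_of_map_mul_mulVec_eq_smul hPTP hP hT hprim hv hμv

end ProjectedStochastic

section KroneckerSquare

variable {ι κ : Type*} [DecidableEq ι] [Fintype κ] {K : κ → Matrix ι ι ℝ}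
  {p : κ → ℝ} {δ : ℝ}

lemma smul_kronecker_one_apply_le (hK : ∀ k i j, 0 ≤ K k i j) (hp : ∀ k, 0 ≤ p k)
    (hδ : ∀ k i, δ ≤ K k i i) (x y : ι × ι) :
    (δ • ((∑ k, p k • K k) ⊗ₖ (1 : Matrix ι ι ℝ))) x y ≤ (∑ k, p k • (K k ⊗ₖ K k)) x y := by
  obtain ⟨i, j⟩ := x
  obtain ⟨a, b⟩ := y
  simp only [Matrix.smul_apply, kroneckerMap_apply, Matrix.sum_apply, smul_eq_mul, sum_mul,
    mul_sum]
  refine sum_le_sum fun k _ => ?_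
  rcases eq_or_ne j b with rfl | hjb
  · simp only [one_apply_eq, mul_one]
    nlinarith [mul_nonneg (sub_nonneg.2 (hδ k j)) (mul_nonneg (hp k) (hK k i a))]
  · simp only [one_apply_ne hjb, mul_zero]
    exact mul_nonneg (hp k) (mul_nonneg (hK k i a) (hK k j b))

lemma smul_one_kronecker_apply_le (hK : ∀ k i j, 0 ≤ K k i j) (hp : ∀ k, 0 ≤ p k)
    (hδ : ∀ k i, δ ≤ K k i i) (x y : ι × ι) :
    (δ • ((1 : Matrix ι ι ℝ) ⊗ₖ ∑ k, p k • K k)) x y ≤ (∑ k, p k • (K k ⊗ₖ K k)) x y := by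
  obtain ⟨i, j⟩ := x
  obtain ⟨a, b⟩ := y
  simp only [Matrix.smul_apply, kroneckerMap_apply, Matrix.sum_apply, smul_eq_mul, mul_sum]
  refine sum_le_sum fun k _ => ?_
  rcases eq_or_ne i a with rfl | hia
  · simp only [one_apply_eq, one_mul]
    nlinarith [mul_nonneg (sub_nonneg.2 (hδ k i)) (mul_nonneg (hp k) (hK k j b))]
  · simp only [one_apply_ne hia, zero_mul, mul_zero]
    exact mul_nonneg (hp k) (mul_nonneg (hK k i a) (hK k j b))

theorem isPrimitive_sum_smul_kronecker_self [Fintype ι] (hK : ∀ k i j, 0 ≤ K k i j)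
    (hdiag : ∀ k i, 0 < K k i i) (hp : ∀ k, 0 ≤ p k)
    (hprim : _root_.IsPrimitive (∑ k, p k • K k)) :
    _root_.IsPrimitive (∑ k, p k • (K k ⊗ₖ K k)) := by
  obtain ⟨δ, hδ, hδle⟩ := exists_pos_le_of_forall_pos (fun x : κ × ι => K x.1 x.2 x.2)
    fun x => hdiag x.1 x.2
  have hδK : ∀ k i, δ ≤ K k i i := fun k i => hδle (k, i)
  set E := ∑ k, p k • K k
  have hE : ∀ i j, 0 ≤ E i j := fun i j => by
    simpa [E, Matrix.sum_apply] using
      sum_nonneg fun k (_ : k ∈ univ) => mul_nonneg (hp k) (hK k i j)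
  have hL0 : ∀ x y, 0 ≤ (δ • (E ⊗ₖ (1 : Matrix ι ι ℝ))) x y := fun x y =>
    mul_nonneg hδ.le (mul_nonneg (hE _ _) (by rw [one_apply]; positivity))
  have hR0 : ∀ x y, 0 ≤ (δ • ((1 : Matrix ι ι ℝ) ⊗ₖ E)) x y := fun x y =>
    mul_nonneg hδ.le (mul_nonneg (by rw [one_apply]; positivity) (hE _ _))
  obtain ⟨m, hm, hpos⟩ := hprim
  refine ⟨2 * m, by omega, fun x y => ?_⟩
  calc 0 < ((δ • (E ⊗ₖ (1 : Matrix ι ι ℝ))) ^ m * (δ • ((1 : Matrix ι ι ℝ) ⊗ₖ E)) ^ m) x y := by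
        rw [smul_pow, smul_pow, kronecker_pow, kronecker_pow, one_pow, smul_mul_smul,
          ← mul_kronecker_mul, mul_one, one_mul, Matrix.smul_apply, kroneckerMap_apply]
        exact mul_pos (by positivity) (mul_pos (hpos _ _) (hpos _ _))
    _ ≤ ((∑ k, p k • (K k ⊗ₖ K k)) ^ m * (∑ k, p k • (K k ⊗ₖ K k)) ^ m) x y :=
        mul_apply_le_mul_apply (pow_apply_nonneg hL0 m) (pow_apply_nonneg hR0 m)
          (pow_apply_le_pow_apply hL0 (smul_kronecker_one_apply_le hK hp hδK) m)
          (pow_apply_le_pow_apply hR0 (smul_one_kronecker_apply_le hK hp hδK) m) x y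
    _ = ((∑ k, p k • (K k ⊗ₖ K k)) ^ (2 * m)) x y := by rw [two_mul, pow_add]

end KroneckerSquare

lemma Jmat_mem_rowStochastic (N : ℕ) : Jmat N ∈ rowStochastic ℝ (Fin N) := by
  refine mem_rowStochastic_iff_sum.2 ⟨fun _ _ => by simp [Jmat], fun i => ?_⟩
  have : (N : ℝ) ≠ 0 := Nat.cast_ne_zero.2 (Fin.pos i).ne'
  simp [Jmat, this]

lemma mul_Jmat_of_mem_rowStochastic {N : ℕ} {K : Matrix (Fin N) (Fin N) ℝ}
    (hK : K ∈ rowStochastic ℝ (Fin N)) : K * Jmat N = Jmat N := by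
  ext i j
  simp [Jmat, mul_apply, ← sum_mul, sum_row_of_mem_rowStochastic hK i]

theorem stmt10_general {N M : ℕ}
    (K : Fin M → Matrix (Fin N) (Fin N) ℝ)
    (hK : ∀ k, RowStochastic (K k))
    (hdiag : ∀ k i, 0 < K k i i)
    (p : Fin M → ℝ) (hp : ∀ k, 0 < p k) (hpsum : ∑ k, p k = 1)
    (hprim : _root_.IsPrimitive (∑ k, p k • K k)) :
    specRad (((1 - Jmat N) ⊗ₖ (1 - Jmat N)) * ∑ k, p k • (K k ⊗ₖ K k)) < 1 := by
  have hKs : ∀ k, K k ∈ rowStochastic ℝ (Fin N) := fun k => mem_rowStochastic_iff_sum.2 (hK k)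
  have hQKQ : ∀ k, (1 - Jmat N) * K k * (1 - Jmat N) = (1 - Jmat N) * K k := fun k =>
    one_sub_mul_mul_one_sub_of_mul_eq (mul_Jmat_of_mem_rowStochastic (Jmat_mem_rowStochastic N))
      (mul_Jmat_of_mem_rowStochastic (hKs k))
  refine specRad_mul_lt_one ?_ ?_ ?_
    (isPrimitive_sum_smul_kronecker_self (fun k => (hK k).1) hdiag (fun k => (hp k).le) hprim)
  · simp only [mul_sum, sum_mul, mul_smul_comm, smul_mul_assoc, ← mul_kronecker_mul, hQKQ]
  · rw [kronecker_mulVec_one, sub_mulVec, one_mulVec, (Jmat_mem_rowStochastic N).2, sub_self]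
    ext
    simp
  · exact convex_rowStochastic.sum_mem (fun k _ => (hp k).le) hpsum
      fun k _ => kronecker_mem_rowStochastic (hKs k) (hKs k)

theorem stmt10 {N M : ℕ} (hN : 1 ≤ N) (hM : 1 ≤ M)
    (K : Fin M → Matrix (Fin N) (Fin N) ℝ)
    (hK : ∀ k, RowStochastic (K k))
    (hdiag : ∀ k i, 0 < K k i i)
    (p : Fin M → ℝ) (hp : ∀ k, 0 < p k) (hpsum : ∑ k, p k = 1)
    (hprim : _root_.IsPrimitive (∑ k, p k • K k)) :
    specRad (((1 - Jmat N) ⊗ₖ (1 - Jmat N)) * ∑ k, p k • (K k ⊗ₖ K k)) < 1 :=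
  stmt10_general K hK hdiag p hp hpsum hprim
end
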